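/- Let A₁ ∈ ℂ^{m×n}, b₁ ∈ ℂ^m, A₂ ∈ ℂ^{k×n} with rank(A₂) = k ≥ 1, b₂ ∈ ℂ^k. Define P_{X,Y} := (A₁(I − A₂†A₂))†A₁ and P_{Y,X} := I − P_{X,Y}. Then: (i) P_{X,Y} is idempotent with range X := N(A₂) ∩ (N(A₂) ∩ N(A₁))⊥ and null space Y := N(A₁) ⊕ (A₁*A₁)†((N(A₁) + N(A₂))⊥), where (A₁*A₁)†(S) denotes the image of the subspace S under the linear map given by (A₁*A₁)†; and (ii) if x ∈ ℂ^n minimizes ‖A₁x − b₁‖² over all x satisfying A₂x = b₂, then there exists z ∈ N(A₁) ∩ N(A₂) such that x = A₁†b₁ + P_{Y,X}(A₂†b₂ − A₁†b₁) + z. -/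

import Mathlib

/-!
Write `P = 1 - A₂†A₂`, the orthogonal projector onto `N(A₂)`. The Moore-Penrose inverse
`G = (A₁P)†` satisfies `PG = G`, so `A₁G = A₁PG` and `GA₁G = G`. Hence `GA₁` is idempotent with
the range of `G`, which is `N(A₁P)ᗮ`, and its kernel is the preimage of `N(P) = N(A₂)ᗮ` under
`A₁*A₁`. Both `N(A₁P)` and that preimage are computed from one identity: if `fgf = f`, then
`f⁻¹(S) = N(f) ⊔ g(S ∩ R(f))`, used with `(f, g) = (P, 1)` and `(f, g) = (A₁*A₁, (A₁*A₁)†)`.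

For (ii), the residual `r = A₁x - b₁` of a constrained minimiser is orthogonal to `A₁(N(A₂))`,
i.e. `PA₁*r = 0`, whence `GA₁(x - A₁†b₁) = 0`. Then `z = (1 - GA₁)(x - A₂†b₂)` works, because
`1 - GA₁` maps `N(A₂) = R(P)` into `N(A₁) ∩ N(A₂)`.
-/

open Matrix

def IsMoorePenrose {m n : ℕ} (A : Matrix (Fin m) (Fin n) ℂ)
    (X : Matrix (Fin n) (Fin m) ℂ) : Prop :=
  A * X * A = A ∧ X * A * X = X ∧ (A * X)ᴴ = A * X ∧ (X * A)ᴴ = X * A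

noncomputable def mrange {m n : ℕ} (A : Matrix (Fin m) (Fin n) ℂ) :
    Submodule ℂ (EuclideanSpace ℂ (Fin m)) :=
  LinearMap.range (Matrix.toEuclideanLin A)

noncomputable def mker {m n : ℕ} (A : Matrix (Fin m) (Fin n) ℂ) :
    Submodule ℂ (EuclideanSpace ℂ (Fin n)) :=
  LinearMap.ker (Matrix.toEuclideanLin A)

namespace LinearMap

variable {R M N : Type*} [Ring R] [AddCommGroup M] [Module R M] [AddCommGroup N] [Module R N]
  {f : M →ₗ[R] N} {g : N →ₗ[R] M}

theorem comap_eq_ker_sup_map_inf_range (hfgf : f ∘ₗ g ∘ₗ f = f) (S : Submodule R N) :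
    S.comap f = ker f ⊔ (S ⊓ range f).map g := by
  have hfg : ∀ y ∈ range f, f (g y) = y := by
    rintro _ ⟨x, rfl⟩
    exact LinearMap.congr_fun hfgf x
  apply le_antisymm
  · intro x hx
    have hker : x - g (f x) ∈ ker f := by
      rw [mem_ker, map_sub, hfg _ (mem_range_self f x), sub_self]
    rw [← sub_add_cancel x (g (f x))]
    exact Submodule.add_mem_sup hker ⟨f x, ⟨hx, mem_range_self f x⟩, rfl⟩
  · refine sup_le (fun x hx => ?_) ?_
    · simp [Submodule.mem_comap, mem_ker.mp hx]
    · rintro _ ⟨y, ⟨hyS, hyf⟩, rfl⟩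
      simpa [Submodule.mem_comap, hfg y hyf] using hyS

theorem disjoint_ker_map_inf_range (hfgf : f ∘ₗ g ∘ₗ f = f) (S : Submodule R N) :
    Disjoint (ker f) ((S ⊓ range f).map g) := by
  rw [Submodule.disjoint_def]
  rintro _ hx ⟨_, ⟨-, ⟨u, rfl⟩⟩, rfl⟩
  have : f u = 0 := by simpa using (LinearMap.congr_fun hfgf u).symm.trans hx
  simp [this]

end LinearMap

namespace Matrix

variable {l m n : ℕ}

theorem toEuclideanLin_mul (A : Matrix (Fin l) (Fin m) ℂ) (B : Matrix (Fin m) (Fin n) ℂ) :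
    (A * B).toEuclideanLin = A.toEuclideanLin ∘ₗ B.toEuclideanLin :=
  toLpLin_mul_same _ _ _

theorem mker_mul (A : Matrix (Fin l) (Fin m) ℂ) (B : Matrix (Fin m) (Fin n) ℂ) :
    mker (A * B) = (mker A).comap B.toEuclideanLin := by
  rw [mker, toEuclideanLin_mul, LinearMap.ker_comp, mker]

theorem mrange_mul_le (A : Matrix (Fin l) (Fin m) ℂ) (B : Matrix (Fin m) (Fin n) ℂ) :
    mrange (A * B) ≤ mrange A := by
  rw [mrange, toEuclideanLin_mul]
  exact LinearMap.range_comp_le_range _ _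

theorem mrange_conjTranspose (A : Matrix (Fin m) (Fin n) ℂ) : mrange Aᴴ = (mker A)ᗮ := by
  unfold mrange mker
  rw [toEuclideanLin_conjTranspose_eq_adjoint, LinearMap.orthogonal_ker]

theorem mker_conjTranspose_mul_self (A : Matrix (Fin m) (Fin n) ℂ) : mker (Aᴴ * A) = mker A := by
  rw [mker, toEuclideanLin_mul, toEuclideanLin_conjTranspose_eq_adjoint,
    LinearMap.ker_adjoint_comp_self, mker]

theorem mrange_conjTranspose_mul_self (A : Matrix (Fin m) (Fin n) ℂ) :
    mrange (Aᴴ * A) = (mker A)ᗮ := by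
  rw [← mrange_conjTranspose, mrange, mrange, toEuclideanLin_mul,
    toEuclideanLin_conjTranspose_eq_adjoint, LinearMap.range_adjoint_comp_self]

theorem isIdempotentElem_toEuclideanLin {P : Matrix (Fin n) (Fin n) ℂ} (hP : IsIdempotentElem P) :
    IsIdempotentElem P.toEuclideanLin := by
  rw [IsIdempotentElem, Module.End.mul_eq_comp, ← toEuclideanLin_mul, hP.eq]

theorem toEuclideanLin_one_sub (P : Matrix (Fin n) (Fin n) ℂ) :
    (1 - P).toEuclideanLin = 1 - P.toEuclideanLin := by
  rw [map_sub, toLpLin_one, Module.End.one_eq_id]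

theorem mker_one_sub {P : Matrix (Fin n) (Fin n) ℂ} (hP : IsIdempotentElem P) :
    mker (1 - P) = mrange P := by
  rw [mker, mrange, toEuclideanLin_one_sub,
    LinearMap.IsIdempotentElem.range_eq_ker_one_sub (isIdempotentElem_toEuclideanLin hP)]

theorem mrange_one_sub {P : Matrix (Fin n) (Fin n) ℂ} (hP : IsIdempotentElem P) :
    mrange (1 - P) = mker P := by
  rw [mker, mrange, toEuclideanLin_one_sub,
    LinearMap.IsIdempotentElem.ker_eq_range_one_sub (isIdempotentElem_toEuclideanLin hP)]

theorem mker_le_mker_mul (A : Matrix (Fin l) (Fin m) ℂ) (B : Matrix (Fin m) (Fin n) ℂ) :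
    mker B ≤ mker (A * B) := by
  rw [mker, mker, toEuclideanLin_mul]
  exact LinearMap.ker_le_ker_comp _ _

theorem mrange_mul_eq_of_mul_mul_eq {A : Matrix (Fin m) (Fin n) ℂ} {X : Matrix (Fin n) (Fin m) ℂ}
    (h : X * A * X = X) : mrange (X * A) = mrange X :=
  le_antisymm (mrange_mul_le X A) (by
    conv_lhs => rw [← h]
    exact mrange_mul_le _ _)

theorem mker_mul_of_isIdempotentElem (A : Matrix (Fin m) (Fin n) ℂ) {P : Matrix (Fin n) (Fin n) ℂ}
    (hP : IsIdempotentElem P) : mker (A * P) = mker P ⊔ (mker A ⊓ mrange P) := by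
  have hPP : P.toEuclideanLin ∘ₗ LinearMap.id ∘ₗ P.toEuclideanLin = P.toEuclideanLin := by
    rw [LinearMap.id_comp, ← Module.End.mul_eq_comp, isIdempotentElem_toEuclideanLin hP]
  rw [mker_mul, LinearMap.comap_eq_ker_sup_map_inf_range hPP, Submodule.map_id]
  rfl

end Matrix

namespace IsMoorePenrose

section

variable {m n : ℕ} {A : Matrix (Fin m) (Fin n) ℂ} {X : Matrix (Fin n) (Fin m) ℂ}

theorem conjTranspose_mul_mul (h : IsMoorePenrose A X) : Aᴴ * A * X = Aᴴ :=
  calc Aᴴ * A * X = Aᴴ * (A * X)ᴴ := by rw [h.2.2.1, Matrix.mul_assoc]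
    _ = Aᴴ := by rw [← conjTranspose_mul, h.1]

theorem mul_mul_conjTranspose (h : IsMoorePenrose A X) : X * A * Aᴴ = Aᴴ :=
  calc X * A * Aᴴ = (A * (X * A))ᴴ := by rw [conjTranspose_mul, h.2.2.2]
    _ = Aᴴ := by rw [← Matrix.mul_assoc, h.1]

theorem eq_conjTranspose_mul (h : IsMoorePenrose A X) : X = Aᴴ * (Xᴴ * X) :=
  calc X = (X * A)ᴴ * X := by rw [h.2.2.2, h.2.1]
    _ = Aᴴ * (Xᴴ * X) := by rw [conjTranspose_mul, Matrix.mul_assoc]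

theorem eq_mul_conjTranspose (h : IsMoorePenrose A X) : X = X * Xᴴ * Aᴴ :=
  calc X = X * (A * X)ᴴ := by rw [h.2.2.1, ← Matrix.mul_assoc, h.2.1]
    _ = X * Xᴴ * Aᴴ := by rw [conjTranspose_mul, Matrix.mul_assoc]

theorem mrange_eq (h : IsMoorePenrose A X) : mrange X = mrange Aᴴ := by
  apply le_antisymm
  · conv_lhs => rw [h.eq_conjTranspose_mul]
    exact mrange_mul_le _ _
  · conv_lhs => rw [← h.mul_mul_conjTranspose]
    exact (mrange_mul_le _ _).trans (mrange_mul_le _ _)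

theorem mker_eq (h : IsMoorePenrose A X) : mker X = mker Aᴴ := by
  apply le_antisymm
  · rw [← h.conjTranspose_mul_mul]
    exact mker_le_mker_mul _ _
  · rw [h.eq_mul_conjTranspose]
    exact mker_le_mker_mul _ _

theorem isHermitian_mul (h : IsMoorePenrose A X) : (X * A).IsHermitian := h.2.2.2

theorem isIdempotentElem_mul (h : IsMoorePenrose A X) : IsIdempotentElem (X * A) := by
  rw [IsIdempotentElem, ← Matrix.mul_assoc, h.2.1]

theorem mrange_mul (h : IsMoorePenrose A X) : mrange (X * A) = (mker A)ᗮ := by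
  rw [mrange_mul_eq_of_mul_mul_eq h.2.1, h.mrange_eq, mrange_conjTranspose]

theorem mker_mul (h : IsMoorePenrose A X) : mker (X * A) = mker A := by
  apply le_antisymm
  · conv_rhs => rw [← h.1, Matrix.mul_assoc]
    exact mker_le_mker_mul _ _
  · exact mker_le_mker_mul _ _

theorem mul_one_sub_mul (h : IsMoorePenrose A X) : A * (1 - X * A) = 0 := by
  rw [Matrix.mul_sub, Matrix.mul_one, ← Matrix.mul_assoc, h.1, sub_self]

theorem mker_one_sub_mul (h : IsMoorePenrose A X) : mker (1 - X * A) = (mker A)ᗮ := by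
  rw [mker_one_sub h.isIdempotentElem_mul, h.mrange_mul]

theorem mrange_one_sub_mul (h : IsMoorePenrose A X) : mrange (1 - X * A) = mker A := by
  rw [mrange_one_sub h.isIdempotentElem_mul, h.mker_mul]

end

section

variable {m n : ℕ} {C : Matrix (Fin m) (Fin n) ℂ} {P : Matrix (Fin n) (Fin n) ℂ}
  {G : Matrix (Fin n) (Fin m) ℂ}

theorem proj_mul_eq_self (hP : P.IsHermitian) (hP' : IsIdempotentElem P)
    (hG : IsMoorePenrose (C * P) G) : P * G = G := by
  have hCP : P * (C * P)ᴴ = (C * P)ᴴ := by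
    rw [conjTranspose_mul, hP.eq, ← Matrix.mul_assoc, hP'.eq]
  conv_lhs => rw [hG.eq_conjTranspose_mul]
  rw [← Matrix.mul_assoc, hCP, ← hG.eq_conjTranspose_mul]

theorem mul_mul_self_of_proj (hP : P.IsHermitian) (hP' : IsIdempotentElem P)
    (hG : IsMoorePenrose (C * P) G) : G * C * G = G := by
  calc G * C * G = G * (C * P) * G := by
        rw [Matrix.mul_assoc G C, Matrix.mul_assoc G, Matrix.mul_assoc C,
          hG.proj_mul_eq_self hP hP']
    _ = G := hG.2.1

theorem isIdempotentElem_mul_of_proj (hP : P.IsHermitian) (hP' : IsIdempotentElem P)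
    (hG : IsMoorePenrose (C * P) G) : IsIdempotentElem (G * C) := by
  rw [IsIdempotentElem, ← Matrix.mul_assoc, hG.mul_mul_self_of_proj hP hP']

theorem mrange_mul_of_proj (hP : P.IsHermitian) (hP' : IsIdempotentElem P)
    (hG : IsMoorePenrose (C * P) G) : mrange (G * C) = (mker (C * P))ᗮ := by
  rw [mrange_mul_eq_of_mul_mul_eq (hG.mul_mul_self_of_proj hP hP'), hG.mrange_eq,
    mrange_conjTranspose]

theorem mker_eq_comap_of_proj (hP : P.IsHermitian) (hG : IsMoorePenrose (C * P) G) :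
    mker G = (mker P).comap Cᴴ.toEuclideanLin := by
  rw [hG.mker_eq, conjTranspose_mul, hP.eq, Matrix.mker_mul]

theorem mker_mul_of_proj (hP : P.IsHermitian) (hG : IsMoorePenrose (C * P) G) :
    mker (G * C) = (mker P).comap (Cᴴ * C).toEuclideanLin := by
  rw [Matrix.mker_mul, hG.mker_eq_comap_of_proj hP, toEuclideanLin_mul, Submodule.comap_comp]

theorem mul_one_sub_mul_mul_of_proj (hP : P.IsHermitian) (hP' : IsIdempotentElem P)
    (hG : IsMoorePenrose (C * P) G) : C * (1 - G * C) * P = 0 := by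
  calc C * (1 - G * C) * P = C * P - C * G * (C * P) := by
        simp only [Matrix.mul_sub, Matrix.sub_mul, Matrix.mul_one, Matrix.mul_assoc]
    _ = C * P - C * (P * G) * (C * P) := by rw [hG.proj_mul_eq_self hP hP']
    _ = 0 := by rw [← Matrix.mul_assoc C P, hG.1, sub_self]

theorem mul_mul_eq_self_of_proj (hP : P.IsHermitian) (hG : IsMoorePenrose (C * P) G)
    {X : Matrix (Fin n) (Fin m) ℂ} (hX : IsMoorePenrose C X) : G * (C * X) = G :=
  calc G * (C * X) = G * Gᴴ * (P * (Cᴴ * C * X)) := by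
        conv_lhs => rw [hG.eq_mul_conjTranspose, conjTranspose_mul, hP.eq]
        simp only [Matrix.mul_assoc]
    _ = G := by
        rw [hX.conjTranspose_mul_mul, ← hP.eq, ← conjTranspose_mul, ← hG.eq_mul_conjTranspose]

end

end IsMoorePenrose

theorem Submodule.mem_orthogonal_of_forall_norm_le {𝕜 E : Type*} [RCLike 𝕜]
    [NormedAddCommGroup E] [InnerProductSpace 𝕜 E] {K : Submodule 𝕜 E} {u : E}
    (h : ∀ w ∈ K, ‖u‖ ≤ ‖u - w‖) : u ∈ Kᗮ := by
  have hinf : ‖u - 0‖ = ⨅ w : K, ‖u - w‖ := by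
    refine le_antisymm (le_ciInf fun w => by simpa using h w w.2) ?_
    exact ciInf_le ⟨0, by rintro _ ⟨w, rfl⟩; positivity⟩ (0 : K) |>.trans_eq (by simp)
  rw [Submodule.mem_orthogonal']
  simpa using (K.norm_eq_iInf_iff_inner_eq_zero K.zero_mem).mp hinf

theorem conjTranspose_residual_mem_orthogonal_mker {m n k : ℕ}
    {A₁ : Matrix (Fin m) (Fin n) ℂ} {A₂ : Matrix (Fin k) (Fin n) ℂ} {b₁ : EuclideanSpace ℂ (Fin m)}
    {b₂ : EuclideanSpace ℂ (Fin k)} {x : EuclideanSpace ℂ (Fin n)} (hx : A₂.toEuclideanLin x = b₂)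
    (hmin : ∀ y, A₂.toEuclideanLin y = b₂ →
      ‖A₁.toEuclideanLin x - b₁‖ ^ 2 ≤ ‖A₁.toEuclideanLin y - b₁‖ ^ 2) :
    A₁ᴴ.toEuclideanLin (A₁.toEuclideanLin x - b₁) ∈ (mker A₂)ᗮ := by
  have hres : A₁.toEuclideanLin x - b₁ ∈ ((mker A₂).map A₁.toEuclideanLin)ᗮ := by
    refine Submodule.mem_orthogonal_of_forall_norm_le ?_
    rintro _ ⟨w, hw, rfl⟩
    have hfeas : A₂.toEuclideanLin (x - w) = b₂ := by
      rw [map_sub, hx, LinearMap.mem_ker.mp hw, sub_zero]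
    rw [sub_right_comm, ← map_sub]
    exact (sq_le_sq₀ (norm_nonneg _) (norm_nonneg _)).mp (hmin _ hfeas)
  rw [Submodule.mem_orthogonal]
  intro w hw
  rw [toEuclideanLin_conjTranspose_eq_adjoint, LinearMap.adjoint_inner_right]
  exact hres _ ⟨w, hw, rfl⟩

theorem exists_mem_mker_inf_eq_of_constrained_minimizer {m n k : ℕ}
    {A₁ : Matrix (Fin m) (Fin n) ℂ} {A₂ : Matrix (Fin k) (Fin n) ℂ}
    {A₁d : Matrix (Fin n) (Fin m) ℂ} {A₂d : Matrix (Fin n) (Fin k) ℂ}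
    {G : Matrix (Fin n) (Fin m) ℂ} (hA₁d : IsMoorePenrose A₁ A₁d)
    (hA₂d : IsMoorePenrose A₂ A₂d) (hG : IsMoorePenrose (A₁ * (1 - A₂d * A₂)) G)
    {b₁ : EuclideanSpace ℂ (Fin m)} {b₂ : EuclideanSpace ℂ (Fin k)}
    {x : EuclideanSpace ℂ (Fin n)} (hx : A₂.toEuclideanLin x = b₂)
    (hmin : ∀ y, A₂.toEuclideanLin y = b₂ →
      ‖A₁.toEuclideanLin x - b₁‖ ^ 2 ≤ ‖A₁.toEuclideanLin y - b₁‖ ^ 2) :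
    ∃ z ∈ mker A₁ ⊓ mker A₂, x = A₁d.toEuclideanLin b₁ +
      (1 - G * A₁).toEuclideanLin (A₂d.toEuclideanLin b₂ - A₁d.toEuclideanLin b₁) + z := by
  set P := 1 - A₂d * A₂
  have hP : P.IsHermitian := isHermitian_one.sub hA₂d.isHermitian_mul
  have hP' : IsIdempotentElem P := hA₂d.isIdempotentElem_mul.one_sub
  have hGres : G.toEuclideanLin (A₁.toEuclideanLin x - b₁) = 0 := by
    have := conjTranspose_residual_mem_orthogonal_mker (b₁ := b₁) hx hmin
    rwa [← hA₂d.mker_one_sub_mul, ← Submodule.mem_comap, ← hG.mker_eq_comap_of_proj hP] at this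
  have hGA₁ : (G * A₁).toEuclideanLin (x - A₁d.toEuclideanLin b₁) = 0 := by
    calc (G * A₁).toEuclideanLin (x - A₁d.toEuclideanLin b₁)
        = G.toEuclideanLin (A₁.toEuclideanLin x) - (G * (A₁ * A₁d)).toEuclideanLin b₁ := by
          simp only [toEuclideanLin_mul, LinearMap.comp_apply, map_sub]
      _ = 0 := by rw [hG.mul_mul_eq_self_of_proj hP hA₁d, ← map_sub, hGres]
  have hxd : x - A₂d.toEuclideanLin b₂ ∈ mker A₂ := by
    rw [mker, LinearMap.mem_ker, map_sub, ← hx, ← LinearMap.comp_apply, ← LinearMap.comp_apply,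
      ← toEuclideanLin_mul, ← toEuclideanLin_mul, hA₂d.1, sub_self]
  obtain ⟨u, hu⟩ : x - A₂d.toEuclideanLin b₂ ∈ mrange P := by
    rwa [hA₂d.mrange_one_sub_mul]
  refine ⟨(1 - G * A₁).toEuclideanLin (x - A₂d.toEuclideanLin b₂),
    Submodule.mem_inf.mpr ⟨?_, ?_⟩, ?_⟩
  · rw [mker, LinearMap.mem_ker, ← hu, ← LinearMap.comp_apply, ← LinearMap.comp_apply,
      ← toEuclideanLin_mul, ← toEuclideanLin_mul, hG.mul_one_sub_mul_mul_of_proj hP hP',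
      map_zero, LinearMap.zero_apply]
  · have hA₂G : A₂ * (1 - G * A₁) = A₂ := by
      rw [← hG.proj_mul_eq_self hP hP', Matrix.mul_sub, Matrix.mul_one, ← Matrix.mul_assoc,
        ← Matrix.mul_assoc, hA₂d.mul_one_sub_mul, Matrix.zero_mul, Matrix.zero_mul, sub_zero]
    rw [mker, LinearMap.mem_ker, ← LinearMap.comp_apply, ← toEuclideanLin_mul, hA₂G]
    exact hxd
  · rw [add_assoc, ← map_add, toEuclideanLin_one_sub, LinearMap.sub_apply,
      Module.End.one_apply, sub_add_sub_cancel', hGA₁]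
    abel

theorem stmt17_general {m n k : ℕ}
    (A₁ : Matrix (Fin m) (Fin n) ℂ) (b₁ : EuclideanSpace ℂ (Fin m))
    (A₂ : Matrix (Fin k) (Fin n) ℂ) (b₂ : EuclideanSpace ℂ (Fin k))
    (A₁d : Matrix (Fin n) (Fin m) ℂ) (hA₁d : IsMoorePenrose A₁ A₁d)
    (A₂d : Matrix (Fin n) (Fin k) ℂ) (hA₂d : IsMoorePenrose A₂ A₂d)
    (G : Matrix (Fin n) (Fin m) ℂ) (hG : IsMoorePenrose (A₁ * (1 - A₂d * A₂)) G)
    (W : Matrix (Fin n) (Fin n) ℂ) (hW : IsMoorePenrose (A₁ᴴ * A₁) W) :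
    ((G * A₁) * (G * A₁) = G * A₁ ∧
      mrange (G * A₁) = mker A₂ ⊓ (mker A₂ ⊓ mker A₁)ᗮ ∧
      mker (G * A₁) =
        mker A₁ ⊔ Submodule.map (Matrix.toEuclideanLin W) ((mker A₁ ⊔ mker A₂)ᗮ) ∧
      mker A₁ ⊓ Submodule.map (Matrix.toEuclideanLin W) ((mker A₁ ⊔ mker A₂)ᗮ) = ⊥) ∧
    ∀ x : EuclideanSpace ℂ (Fin n), Matrix.toEuclideanLin A₂ x = b₂ →
      (∀ y : EuclideanSpace ℂ (Fin n), Matrix.toEuclideanLin A₂ y = b₂ →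
        ‖Matrix.toEuclideanLin A₁ x - b₁‖ ^ 2 ≤ ‖Matrix.toEuclideanLin A₁ y - b₁‖ ^ 2) →
      ∃ z ∈ mker A₁ ⊓ mker A₂,
        x = Matrix.toEuclideanLin A₁d b₁ +
          Matrix.toEuclideanLin (1 - G * A₁)
            (Matrix.toEuclideanLin A₂d b₂ - Matrix.toEuclideanLin A₁d b₁) + z := by
  have hP : (1 - A₂d * A₂).IsHermitian := isHermitian_one.sub hA₂d.isHermitian_mul
  have hP' : IsIdempotentElem (1 - A₂d * A₂) := hA₂d.isIdempotentElem_mul.one_sub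
  have hWT : (A₁ᴴ * A₁).toEuclideanLin ∘ₗ W.toEuclideanLin ∘ₗ (A₁ᴴ * A₁).toEuclideanLin =
      (A₁ᴴ * A₁).toEuclideanLin := by
    rw [← toEuclideanLin_mul, ← toEuclideanLin_mul, ← Matrix.mul_assoc, hW.1]
  have hS : (mker A₁ ⊔ mker A₂)ᗮ =
      mker (1 - A₂d * A₂) ⊓ LinearMap.range (A₁ᴴ * A₁).toEuclideanLin := by
    rw [← Submodule.inf_orthogonal, hA₂d.mker_one_sub_mul, ← mrange,
      mrange_conjTranspose_mul_self, inf_comm]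
  have hker : LinearMap.ker (A₁ᴴ * A₁).toEuclideanLin = mker A₁ := mker_conjTranspose_mul_self A₁
  refine ⟨⟨hG.isIdempotentElem_mul_of_proj hP hP', ?_, ?_, ?_⟩,
    fun x hx hmin => exists_mem_mker_inf_eq_of_constrained_minimizer hA₁d hA₂d hG hx hmin⟩
  · rw [hG.mrange_mul_of_proj hP hP', mker_mul_of_isIdempotentElem _ hP',
      hA₂d.mker_one_sub_mul, hA₂d.mrange_one_sub_mul, ← Submodule.inf_orthogonal,
      Submodule.orthogonal_orthogonal, inf_comm (mker A₁)]
  · rw [hG.mker_mul_of_proj hP, LinearMap.comap_eq_ker_sup_map_inf_range hWT, hker, hS]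
  · rw [hS, ← hker]
    exact disjoint_iff.mp (LinearMap.disjoint_ker_map_inf_range hWT _)

/-- With `P_{X,Y} := (A₁(I − A₂†A₂))†A₁` and `P_{Y,X} := I − P_{X,Y}`:
(i) `P_{X,Y}` is idempotent with range `X = N(A₂) ∩ (N(A₂) ∩ N(A₁))⊥` and null space
`Y = N(A₁) ⊕ (A₁*A₁)†((N(A₁) + N(A₂))⊥)` (an internal direct sum); (ii) any minimizer of
`‖A₁x − b₁‖²` subject to `A₂x = b₂` equals `A₁†b₁ + P_{Y,X}(A₂†b₂ − A₁†b₁) + z` for some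
`z ∈ N(A₁) ∩ N(A₂)`. -/
theorem stmt17 {m n k : ℕ}
    (A₁ : Matrix (Fin m) (Fin n) ℂ) (b₁ : EuclideanSpace ℂ (Fin m))
    (A₂ : Matrix (Fin k) (Fin n) ℂ) (b₂ : EuclideanSpace ℂ (Fin k))
    (hk : 1 ≤ k) (hA₂ : A₂.rank = k)
    (A₁d : Matrix (Fin n) (Fin m) ℂ) (hA₁d : IsMoorePenrose A₁ A₁d)
    (A₂d : Matrix (Fin n) (Fin k) ℂ) (hA₂d : IsMoorePenrose A₂ A₂d)
    (G : Matrix (Fin n) (Fin m) ℂ) (hG : IsMoorePenrose (A₁ * (1 - A₂d * A₂)) G)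
    (W : Matrix (Fin n) (Fin n) ℂ) (hW : IsMoorePenrose (A₁ᴴ * A₁) W) :
    ((G * A₁) * (G * A₁) = G * A₁ ∧
      mrange (G * A₁) = mker A₂ ⊓ (mker A₂ ⊓ mker A₁)ᗮ ∧
      mker (G * A₁) =
        mker A₁ ⊔ Submodule.map (Matrix.toEuclideanLin W) ((mker A₁ ⊔ mker A₂)ᗮ) ∧
      mker A₁ ⊓ Submodule.map (Matrix.toEuclideanLin W) ((mker A₁ ⊔ mker A₂)ᗮ) = ⊥) ∧
    ∀ x : EuclideanSpace ℂ (Fin n), Matrix.toEuclideanLin A₂ x = b₂ →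
      (∀ y : EuclideanSpace ℂ (Fin n), Matrix.toEuclideanLin A₂ y = b₂ →
        ‖Matrix.toEuclideanLin A₁ x - b₁‖ ^ 2 ≤ ‖Matrix.toEuclideanLin A₁ y - b₁‖ ^ 2) →
      ∃ z ∈ mker A₁ ⊓ mker A₂,
        x = Matrix.toEuclideanLin A₁d b₁ +
          Matrix.toEuclideanLin (1 - G * A₁)
            (Matrix.toEuclideanLin A₂d b₂ - Matrix.toEuclideanLin A₁d b₁) + z :=
  stmt17_general A₁ b₁ A₂ b₂ A₁d hA₁d A₂d hA₂d G hG W hW
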